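/- Let X ⊆ ℝ² be the union of three rays emanating from a common point o such that each pair of the rays makes the angle 2π/3, with the metric on X induced by the Euclidean metric of ℝ². Then X is a minimal universal metric space for the class 𝔉₃ of all metric spaces with at most three points: every metric space with at most three points embeds isometrically into X, and no proper subset of X (with the induced metric) has this property. -/

import Mathlib

universe u v

open Function Set

/-- `f` is an isometric (distance-preserving) embedding of metric spaces. -/
def IsIsomEmb {X : Type u} {Y : Type v} [MetricSpace X] [MetricSpace Y] (f : X → Y) : Prop :=
  ∀ a b : X, dist (f a) (f b) = dist a b

/-- `X` embeds isometrically into `Y`. -/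
def IsomEmbeds (X : Type u) (Y : Type v) [MetricSpace X] [MetricSpace Y] : Prop :=
  ∃ f : X → Y, IsIsomEmb f

/-- `Y` is universal for the class `𝔉₃` of all metric spaces with at most three points. -/
def F3Universal (Y : Type v) [MetricSpace Y] : Prop :=
  ∀ (A : Type u) [MetricSpace A], Cardinal.mk A ≤ 3 → IsomEmbeds A Y

/-- The ray emanating from `o` in the direction of the vector `u` in the Euclidean plane. -/
def Ray (o u : EuclideanSpace ℝ (Fin 2)) : Set (EuclideanSpace ℝ (Fin 2)) :=
  {p | ∃ t : ℝ, 0 ≤ t ∧ p = o + t • u}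

/-!
Two points at parameters `t, s` on distinct rays are at distance `√(t² + s² + ts)` (law of cosines
for the angle `2π/3`), on a common ray at distance `|t - s|`. A triangle with an angle of at least
`2π/3` is realized with that vertex and one neighbour on a common ray; any other triangle is
realized with one vertex on each ray, `o` being its Fermat point. In both cases the parameters are
found by the intermediate value theorem.

Conversely, the triangle with sides `1, 1, √3` (apex angle `2π/3`) is realized in the tripod only
with its apex at `o`, and the equilateral triangle of side `√3 t` only as `{o + t • u k}`. So a
universal subset contains `o` and every `o + t • u k`.
-/

universe w

section Triangles

def RealizesTriangle {Z : Type*} [Dist Z] (y : Fin 3 → Z) (a b c : ℝ) : Prop :=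
  dist (y 0) (y 1) = a ∧ dist (y 0) (y 2) = b ∧ dist (y 1) (y 2) = c

variable {Y : Type v} [MetricSpace Y]

theorem F3Universal.of_forall_realizesTriangle
    (h : ∀ a b c : ℝ, c ≤ a + b → a ≤ b + c → b ≤ a + c →
      ∃ y : Fin 3 → Y, RealizesTriangle y a b c) :
    F3Universal.{u} Y := by
  intro A _ hA
  cases isEmpty_or_nonempty A
  · exact ⟨isEmptyElim, isEmptyElim⟩
  obtain ⟨e⟩ : Nonempty (A ↪ Fin 3) := by
    rw [show (3 : Cardinal.{u}) = Cardinal.mk (ULift.{u} (Fin 3)) by simp, Cardinal.le_def] at hA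
    exact hA.map (·.trans (Equiv.ulift.toEmbedding))
  set x := invFun e
  obtain ⟨y, h01, h02, h12⟩ := h (dist (x 0) (x 1)) (dist (x 0) (x 2)) (dist (x 1) (x 2))
    (dist_triangle_left _ _ _) (dist_triangle_right _ _ _) (dist_triangle _ _ _)
  have hy : ∀ i j, dist (y i) (y j) = dist (x i) (x j) := by
    intro i j
    fin_cases i <;> fin_cases j <;>
      simp [h01, h02, h12, dist_comm (y 1) (y 0), dist_comm (y 2), dist_comm (x 1) (x 0),
        dist_comm (x 2)]
  refine ⟨y ∘ e, fun a b => ?_⟩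
  simp only [comp_apply, hy, x, leftInverse_invFun e.injective _]

theorem F3Universal.exists_realizesTriangle (hY : F3Universal.{max u w} Y) {Z : Type w}
    [MetricSpace Z] {x : Fin 3 → Z} {a b c : ℝ} (hx : RealizesTriangle x a b c) :
    ∃ y : Fin 3 → Y, RealizesTriangle y a b c := by
  obtain ⟨f, hf⟩ := hY (ULift.{u} (range x)) (by simpa using Cardinal.mk_range_le_lift (f := x))
  refine ⟨fun i => f ⟨⟨x i, mem_range_self i⟩⟩, ?_⟩
  simp only [RealizesTriangle, hf _ _]
  exact hx

theorem F3Universal.mem_of_forall_realizesTriangle {S : Set Y} (hS : F3Universal.{max u w} S)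
    {Z : Type w} [MetricSpace Z] {x : Fin 3 → Z} {a b c : ℝ} (hx : RealizesTriangle x a b c)
    {p : Y} (hp : ∀ y : Fin 3 → Y, RealizesTriangle y a b c → p ∈ range y) : p ∈ S := by
  obtain ⟨y, hy⟩ := hS.exists_realizesTriangle hx
  obtain ⟨i, rfl⟩ := hp (fun i => y i) hy
  exact (y i).2

end Triangles

section TripodAlgebra

def tripodDistSq (j k : Fin 3) (t s : ℝ) : ℝ :=
  if j = k then (t - s) ^ 2 else t ^ 2 + s ^ 2 + t * s

theorem tripodDistSq_comm (j k : Fin 3) (t s : ℝ) :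
    tripodDistSq j k t s = tripodDistSq k j s t := by
  simp only [tripodDistSq, eq_comm (a := j)]
  split_ifs <;> ring

/-- The sides `a, b, c` are those of a triangle with vertices `o + t i • u (j i)` in the tripod. -/
def TripodRealizable (a b c : ℝ) : Prop :=
  ∃ (j : Fin 3 → Fin 3) (t : Fin 3 → ℝ), (∀ i, 0 ≤ t i) ∧
    tripodDistSq (j 0) (j 1) (t 0) (t 1) = a ^ 2 ∧ tripodDistSq (j 0) (j 2) (t 0) (t 2) = b ^ 2 ∧
      tripodDistSq (j 1) (j 2) (t 1) (t 2) = c ^ 2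

theorem TripodRealizable.swap_bc {a b c : ℝ} (h : TripodRealizable a b c) :
    TripodRealizable a c b := by
  obtain ⟨j, t, ht, h01, h02, h12⟩ := h
  refine ⟨![j 1, j 0, j 2], ![t 1, t 0, t 2], fun i => ?_, ?_, h12, h02⟩
  · fin_cases i <;> simp [ht]
  · simpa [tripodDistSq_comm (j 1)] using h01

theorem TripodRealizable.swap_ab {a b c : ℝ} (h : TripodRealizable a b c) :
    TripodRealizable b a c := by
  obtain ⟨j, t, ht, h01, h02, h12⟩ := h
  refine ⟨![j 0, j 2, j 1], ![t 0, t 2, t 1], fun i => ?_, h02, h01, ?_⟩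
  · fin_cases i <;> simp [ht]
  · simpa [tripodDistSq_comm (j 2)] using h12

/-- The positive root `s` of `t ^ 2 + s ^ 2 + t * s = a ^ 2`: the point at parameter `s` on one ray
is at distance `a` from the point at parameter `t` on another. -/
noncomputable def tripodPartner (a t : ℝ) : ℝ :=
  (√(4 * a ^ 2 - 3 * t ^ 2) - t) / 2

@[fun_prop]
theorem continuous_tripodPartner (a : ℝ) : Continuous (tripodPartner a) := by
  unfold tripodPartner
  fun_prop

theorem tripodPartner_zero {a : ℝ} (ha : 0 ≤ a) : tripodPartner a 0 = a := by
  rw [tripodPartner, show 4 * a ^ 2 - 3 * 0 ^ 2 = (2 * a) ^ 2 by ring, Real.sqrt_sq (by linarith)]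
  ring

theorem tripodPartner_self {a : ℝ} (ha : 0 ≤ a) : tripodPartner a a = 0 := by
  rw [tripodPartner, show 4 * a ^ 2 - 3 * a ^ 2 = a ^ 2 by ring, Real.sqrt_sq ha]
  ring

variable {a t : ℝ}

theorem tripodPartner_nonneg (ht : 0 ≤ t) (hta : t ≤ a) : 0 ≤ tripodPartner a t := by
  have : t ≤ √(4 * a ^ 2 - 3 * t ^ 2) := Real.le_sqrt_of_sq_le (by nlinarith)
  rw [tripodPartner]
  linarith

theorem tripodPartner_spec (ht : 0 ≤ t) (hta : t ≤ a) :
    t ^ 2 + tripodPartner a t ^ 2 + t * tripodPartner a t = a ^ 2 := by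
  have := Real.sq_sqrt (show 0 ≤ 4 * a ^ 2 - 3 * t ^ 2 by nlinarith)
  rw [tripodPartner]
  linear_combination this / 4

variable {b c : ℝ}

theorem tripodRealizable_of_obtuse (ha : 0 ≤ a) (hb : 0 ≤ b) (hc : 0 ≤ c) (hcab : c ≤ a + b)
    (hobtuse : a ^ 2 + a * b + b ^ 2 ≤ c ^ 2) : TripodRealizable a b c := by
  set f : ℝ → ℝ := fun t => (t + a) ^ 2 + tripodPartner b t ^ 2 + (t + a) * tripodPartner b t
  obtain ⟨t, ⟨ht, htb⟩, hft⟩ : c ^ 2 ∈ f '' Icc 0 b := by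
    refine intermediate_value_Icc hb (by fun_prop) ⟨?_, ?_⟩
    · simp only [f, tripodPartner_zero hb]
      linarith
    · simp only [f, tripodPartner_self hb]
      nlinarith
  have hs := tripodPartner_spec ht htb
  refine ⟨![0, 0, 1], ![t, t + a, tripodPartner b t], fun i => ?_, ?_, ?_, ?_⟩
  · fin_cases i <;> simp [ht, tripodPartner_nonneg ht htb]
    linarith
  · simp [tripodDistSq]
  · simpa [tripodDistSq] using hs
  · simpa [tripodDistSq] using hft

theorem tripodRealizable_of_acute (hb : 0 ≤ b) (hba : b ≤ a) (hac : a ≤ c)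
    (hacute : c ^ 2 ≤ a ^ 2 + a * b + b ^ 2) : TripodRealizable a b c := by
  have ha : 0 ≤ a := hb.trans hba
  set f : ℝ → ℝ := fun t =>
    tripodPartner a t ^ 2 + tripodPartner b t ^ 2 + tripodPartner a t * tripodPartner b t
  obtain ⟨t, ⟨ht, htb⟩, hft⟩ : c ^ 2 ∈ f '' Icc 0 b := by
    refine intermediate_value_Icc' hb (by fun_prop) ⟨?_, ?_⟩
    · have := tripodPartner_spec hb hba
      have := tripodPartner_nonneg hb hba
      simp only [f, tripodPartner_self hb]
      nlinarith
    · simp only [f, tripodPartner_zero ha, tripodPartner_zero hb]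
      linarith
  have hta : t ≤ a := htb.trans hba
  refine ⟨![2, 0, 1], ![t, tripodPartner a t, tripodPartner b t], fun i => ?_, ?_, ?_, ?_⟩
  · fin_cases i <;> simp [ht, tripodPartner_nonneg ht htb, tripodPartner_nonneg ht hta]
  · simpa [tripodDistSq] using tripodPartner_spec ht hta
  · simpa [tripodDistSq] using tripodPartner_spec ht htb
  · simpa [tripodDistSq] using hft

theorem tripodRealizable_of_triangle (hcab : c ≤ a + b) (habc : a ≤ b + c) (hbac : b ≤ a + c) :
    TripodRealizable a b c := by
  -- Sort the sides so that `b ≤ a ≤ c`; the angle opposite `c` is then the largest, and it is at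
  -- least `2π/3` exactly when `a ^ 2 + a * b + b ^ 2 ≤ c ^ 2`.
  wlog hbc : b ≤ c generalizing a b c
  · refine (this ?_ ?_ ?_ ?_).swap_bc <;> linarith
  wlog hac : a ≤ c generalizing a b c
  · refine (this ?_ ?_ ?_ ?_ ?_).swap_bc.swap_ab <;> linarith
  wlog hba : b ≤ a generalizing a b
  · refine (this ?_ ?_ ?_ ?_ ?_ ?_).swap_ab <;> linarith
  rcases le_total (a ^ 2 + a * b + b ^ 2) (c ^ 2) with hobtuse | hacute
  · exact tripodRealizable_of_obtuse (by linarith) (by linarith) (by linarith) hcab hobtuse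
  · exact tripodRealizable_of_acute (by linarith) hba hac hacute

end TripodAlgebra

section TripodRigidity

variable {j k l : Fin 3} {t s w r : ℝ}

theorem eq_of_tripodDistSq_eq (hjk : j ≠ k) (hjl : j ≠ l) (ht : 0 ≤ t) (hs : 0 ≤ s) (hw : 0 ≤ w)
    (h : tripodDistSq j k t s = tripodDistSq j l t w) : s = w := by
  simp only [tripodDistSq, if_neg hjk, if_neg hjl] at h
  have : (s - w) * (s + w + t) = 0 := by linear_combination h
  rcases mul_eq_zero.1 this with h | h <;> linarith

theorem tripodDistSq_eq_zero_or_of_eq (ht : 0 ≤ t) (hs : 0 ≤ s) (hw : 0 ≤ w)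
    (hts : tripodDistSq j k t s = r ^ 2) (htw : tripodDistSq j k t w = r ^ 2) :
    tripodDistSq k k s w = 0 ∨ tripodDistSq k k s w = 4 * r ^ 2 := by
  by_cases hjk : j = k
  · subst hjk
    simp only [tripodDistSq, if_true] at hts htw ⊢
    rcases sq_eq_sq_iff_eq_or_eq_neg.1 hts with h | h <;>
      rcases sq_eq_sq_iff_eq_or_eq_neg.1 htw with h' | h'
    all_goals first | (left; nlinarith) | (right; nlinarith)
  · left
    simp [eq_of_tripodDistSq_eq hjk hjk ht hs hw (hts.trans htw.symm), tripodDistSq]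

theorem ne_of_tripodDistSq_equilateral (hr : 0 < r) (ht : 0 ≤ t) (hs : 0 ≤ s) (hw : 0 ≤ w)
    (hts : tripodDistSq j k t s = r ^ 2) (htw : tripodDistSq j l t w = r ^ 2)
    (hsw : tripodDistSq k l s w = r ^ 2) : j ≠ k := by
  rintro rfl
  rw [tripodDistSq_comm] at htw hsw
  rcases tripodDistSq_eq_zero_or_of_eq hw ht hs htw hsw with h | h <;> nlinarith

theorem eq_of_tripodDistSq_equilateral (hr : 0 < r) (ht : 0 ≤ t) (hs : 0 ≤ s) (hw : 0 ≤ w)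
    (hjk : j ≠ k) (hjl : j ≠ l) (hkl : k ≠ l)
    (hts : tripodDistSq j k t s = 3 * r ^ 2) (htw : tripodDistSq j l t w = 3 * r ^ 2)
    (hsw : tripodDistSq k l s w = 3 * r ^ 2) : t = r ∧ s = r ∧ w = r := by
  obtain rfl : s = w := eq_of_tripodDistSq_eq hjk hjl ht hs hw (hts.trans htw.symm)
  obtain rfl : t = s :=
    eq_of_tripodDistSq_eq hjk.symm hkl hs ht hs (by rw [tripodDistSq_comm, hts, hsw])
  simp only [tripodDistSq, if_neg hjk] at hts
  obtain rfl : t = r := by nlinarith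
  exact ⟨rfl, rfl, rfl⟩

theorem eq_zero_of_tripodDistSq_isosceles (hr : 0 < r) (ht : 0 ≤ t) (hs : 0 ≤ s) (hw : 0 ≤ w)
    (hts : tripodDistSq j k t s = r ^ 2) (htw : tripodDistSq j l t w = r ^ 2)
    (hsw : tripodDistSq k l s w = 3 * r ^ 2) : t = 0 := by
  have hkl : k ≠ l := by
    rintro rfl
    rcases tripodDistSq_eq_zero_or_of_eq ht hs hw hts htw with h | h <;> nlinarith
  wlog hjl : j ≠ l generalizing k l s w
  · obtain rfl : j = l := not_not.1 hjl
    exact this hw hs htw hts (by rw [tripodDistSq_comm, hsw]) hkl.symm hkl.symm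
  by_cases hjk : j = k
  · subst hjk
    simp only [tripodDistSq, if_true, if_neg hjl] at hts htw hsw
    rcases sq_eq_sq_iff_eq_or_eq_neg.1 hts with h | h
    · nlinarith
    · have hsum : s + t + w = 2 * r := by
        refine mul_left_cancel₀ hr.ne' ?_
        linear_combination hsw - htw + (s + t + w) * h
      obtain rfl : w = r - 2 * t := by linarith
      have : t * (t - r) = 0 := by linear_combination htw / 3
      rcases mul_eq_zero.1 this with h | h <;> linarith
  · obtain rfl : s = w := eq_of_tripodDistSq_eq hjk hjl ht hs hw (hts.trans htw.symm)
    simp only [tripodDistSq, if_neg hjk, if_neg hkl] at hts hsw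
    obtain rfl : s = r := by nlinarith
    nlinarith

end TripodRigidity

section Geometry

open InnerProductGeometry Real

variable {E : Type*} [NormedAddCommGroup E] [InnerProductSpace ℝ E]

theorem real_inner_eq_neg_half_of_angle {x y : E} (hx : ‖x‖ = 1) (hy : ‖y‖ = 1)
    (h : angle x y = 2 * π / 3) : inner ℝ x y = -1 / 2 := by
  rw [← cos_angle_mul_norm_mul_norm, h, hx, hy, show 2 * π / 3 = π - π / 3 by ring,
    Real.cos_pi_sub, Real.cos_pi_div_three]
  norm_num

variable {o : E} {u : Fin 3 → E}

theorem dist_sq_tripod (hu : ∀ k, ‖u k‖ = 1)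
    (hang : ∀ j k, j ≠ k → angle (u j) (u k) = 2 * π / 3) (j k : Fin 3) (t s : ℝ) :
    dist (o + t • u j) (o + s • u k) ^ 2 = tripodDistSq j k t s := by
  rw [dist_eq_norm, add_sub_add_left_eq_sub, norm_sub_sq_real, norm_smul, norm_smul,
    real_inner_smul_left, real_inner_smul_right, hu, hu, tripodDistSq]
  split_ifs with hjk
  · rw [hjk, real_inner_self_eq_norm_sq, hu]
    simp only [Real.norm_eq_abs, mul_one, one_pow, sq_abs]
    ring
  · rw [real_inner_eq_neg_half_of_angle (hu j) (hu k) (hang j k hjk)]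
    simp only [Real.norm_eq_abs, mul_one, sq_abs]
    ring

theorem realizesTriangle_tripod_iff (hu : ∀ k, ‖u k‖ = 1)
    (hang : ∀ j k, j ≠ k → angle (u j) (u k) = 2 * π / 3) {j : Fin 3 → Fin 3} {t : Fin 3 → ℝ}
    {a b c : ℝ} (ha : 0 ≤ a) (hb : 0 ≤ b) (hc : 0 ≤ c) :
    RealizesTriangle (fun i => o + t i • u (j i)) a b c ↔
      tripodDistSq (j 0) (j 1) (t 0) (t 1) = a ^ 2 ∧
        tripodDistSq (j 0) (j 2) (t 0) (t 2) = b ^ 2 ∧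
          tripodDistSq (j 1) (j 2) (t 1) (t 2) = c ^ 2 := by
  simp only [RealizesTriangle, ← dist_sq_tripod (o := o) hu hang, sq_eq_sq₀ dist_nonneg ha,
    sq_eq_sq₀ dist_nonneg hb, sq_eq_sq₀ dist_nonneg hc]

end Geometry

section PlaneTripod

open InnerProductGeometry Real

variable {o : EuclideanSpace ℝ (Fin 2)} {u : Fin 3 → EuclideanSpace ℝ (Fin 2)}

theorem exists_params_of_tripod (y : Fin 3 → ↥(⋃ k, Ray o (u k))) :
    ∃ (j : Fin 3 → Fin 3) (t : Fin 3 → ℝ), (∀ i, 0 ≤ t i) ∧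
      (fun i => (y i : EuclideanSpace ℝ (Fin 2))) = fun i => o + t i • u (j i) := by
  choose j t ht hy using fun i => mem_iUnion.1 (y i).2
  exact ⟨j, t, ht, funext hy⟩

theorem exists_realizesTriangle_tripod (hu : ∀ k, ‖u k‖ = 1)
    (hang : ∀ j k, j ≠ k → angle (u j) (u k) = 2 * π / 3) {a b c : ℝ}
    (hcab : c ≤ a + b) (habc : a ≤ b + c) (hbac : b ≤ a + c) :
    ∃ y : Fin 3 → ↥(⋃ k, Ray o (u k)), RealizesTriangle y a b c := by
  obtain ⟨j, t, ht, h⟩ := tripodRealizable_of_triangle hcab habc hbac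
  exact ⟨fun i => ⟨o + t i • u (j i), mem_iUnion.2 ⟨j i, t i, ht i, rfl⟩⟩,
    (realizesTriangle_tripod_iff hu hang (by linarith) (by linarith) (by linarith)).2 h⟩

theorem coe_eq_of_realizesTriangle_isosceles (hu : ∀ k, ‖u k‖ = 1)
    (hang : ∀ j k, j ≠ k → angle (u j) (u k) = 2 * π / 3) {y : Fin 3 → ↥(⋃ k, Ray o (u k))}
    (hy : RealizesTriangle y 1 1 √3) : (y 0 : EuclideanSpace ℝ (Fin 2)) = o := by
  obtain ⟨j, t, ht, hyt⟩ := exists_params_of_tripod y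
  have hy' : RealizesTriangle (fun i => (y i : EuclideanSpace ℝ (Fin 2))) 1 1 √3 := hy
  rw [hyt, realizesTriangle_tripod_iff hu hang zero_le_one zero_le_one (Real.sqrt_nonneg 3),
    Real.sq_sqrt zero_le_three] at hy'
  obtain ⟨h01, h02, h12⟩ := hy'
  rw [congrFun hyt 0, eq_zero_of_tripodDistSq_isosceles one_pos (ht 0) (ht 1) (ht 2) h01 h02
    (by rw [h12]; norm_num), zero_smul, add_zero]

theorem exists_coe_eq_of_realizesTriangle_equilateral (hu : ∀ k, ‖u k‖ = 1)
    (hang : ∀ j k, j ≠ k → angle (u j) (u k) = 2 * π / 3) {r : ℝ} (hr : 0 < r)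
    {y : Fin 3 → ↥(⋃ k, Ray o (u k))} (hy : RealizesTriangle y (√3 * r) (√3 * r) (√3 * r))
    (k : Fin 3) : ∃ i, (y i : EuclideanSpace ℝ (Fin 2)) = o + r • u k := by
  obtain ⟨j, t, ht, hyt⟩ := exists_params_of_tripod y
  have hc : 0 < √3 * r := by positivity
  have hy' : RealizesTriangle (fun i => (y i : EuclideanSpace ℝ (Fin 2))) _ _ _ := hy
  rw [hyt, realizesTriangle_tripod_iff hu hang hc.le hc.le hc.le] at hy'
  obtain ⟨h01, h02, h12⟩ := hy'
  have h10 := (tripodDistSq_comm _ _ _ _).symm.trans h01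
  have h20 := (tripodDistSq_comm _ _ _ _).symm.trans h02
  have h21 := (tripodDistSq_comm _ _ _ _).symm.trans h12
  have n01 := ne_of_tripodDistSq_equilateral hc (ht 0) (ht 1) (ht 2) h01 h02 h12
  have n02 := ne_of_tripodDistSq_equilateral hc (ht 0) (ht 2) (ht 1) h02 h01 h21
  have n12 := ne_of_tripodDistSq_equilateral hc (ht 1) (ht 2) (ht 0) h12 h10 h20
  have hinj : Injective j := by
    intro a b hab
    fin_cases a <;> fin_cases b <;> simp_all
  obtain ⟨i, rfl⟩ := Finite.injective_iff_surjective.1 hinj k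
  rw [mul_pow, Real.sq_sqrt zero_le_three] at h01 h02 h12
  obtain ⟨ht0, ht1, ht2⟩ :=
    eq_of_tripodDistSq_equilateral hr (ht 0) (ht 1) (ht 2) n01 n02 n12 h01 h02 h12
  refine ⟨i, ?_⟩
  rw [congrFun hyt i]
  fin_cases i <;> simp [ht0, ht1, ht2]

end PlaneTripod

theorem statement18 (o : EuclideanSpace ℝ (Fin 2)) (u : Fin 3 → EuclideanSpace ℝ (Fin 2))
    (hu : ∀ k, ‖u k‖ = 1)
    (hang : ∀ j k, j ≠ k → InnerProductGeometry.angle (u j) (u k) = 2 * Real.pi / 3)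
    (X : Set (EuclideanSpace ℝ (Fin 2))) (hX : X = ⋃ k, Ray o (u k)) :
    F3Universal ↥X ∧ ∀ S : Set ↥X, F3Universal ↥S → S = Set.univ := by
  subst hX
  have huniv (a b c : ℝ) (hcab : c ≤ a + b) (habc : a ≤ b + c) (hbac : b ≤ a + c) :
      ∃ y : Fin 3 → ↥(⋃ k, Ray o (u k)), RealizesTriangle y a b c :=
    exists_realizesTriangle_tripod hu hang hcab habc hbac
  refine ⟨F3Universal.of_forall_realizesTriangle huniv, fun S hS => eq_univ_of_forall fun p => ?_⟩
  obtain ⟨j, t, ht, hp⟩ := mem_iUnion.1 p.2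
  rcases ht.eq_or_lt with rfl | ht
  · have h3 : 0 ≤ √3 ∧ √3 ≤ 2 := ⟨Real.sqrt_nonneg 3, by nlinarith [Real.sq_sqrt zero_le_three]⟩
    obtain ⟨x, hx⟩ := huniv 1 1 √3 (by linarith) (by linarith) (by linarith)
    refine hS.mem_of_forall_realizesTriangle hx fun y hy => ⟨0, Subtype.ext ?_⟩
    rw [coe_eq_of_realizesTriangle_isosceles hu hang hy, hp, zero_smul, add_zero]
  · have hc : 0 ≤ √3 * t := by positivity
    obtain ⟨x, hx⟩ := huniv (√3 * t) (√3 * t) (√3 * t) (by linarith) (by linarith) (by linarith)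
    refine hS.mem_of_forall_realizesTriangle hx fun y hy => ?_
    obtain ⟨i, hi⟩ := exists_coe_eq_of_realizesTriangle_equilateral hu hang ht hy j
    exact ⟨i, Subtype.ext (hi.trans hp.symm)⟩
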